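/- Fix two distinct points A, B ∈ ℝ³ and let p₂ = α_AA δ_A⊗δ_A + α_AB δ_A⊗δ_B + α_BA δ_B⊗δ_A + α_BB δ_B⊗δ_B with coefficients satisfying α_ij ≥ 0, Σ α_ij = 1, α_AB = α_BA. Then p₂ is N-density representable for every N ≥ 2 if and only if α_AB + α_BA ≤ 2 √(α_AA · α_BB). -/

import Mathlib

open MeasureTheory ENNReal

noncomputable section

abbrev R3 : Type := EuclideanSpace ℝ (Fin 3)

def IsSymmetricMeasure {N : ℕ} (p : Measure (Fin N → R3)) : Prop :=
  ∀ σ : Equiv.Perm (Fin N), p.map (fun x => x ∘ σ) = p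

def pairMarginal {N : ℕ} (hN : 2 ≤ N) (p : Measure (Fin N → R3)) : Measure (R3 × R3) :=
  p.map (fun x => (x ⟨0, by omega⟩, x ⟨1, by omega⟩))

def NDensityRep (N : ℕ) (hN : 2 ≤ N) (p₂ : Measure (R3 × R3)) : Prop :=
  ∃ pN : Measure (Fin N → R3), IsProbabilityMeasure pN ∧ IsSymmetricMeasure pN ∧
    pairMarginal hN pN = p₂

def twoSitePair (A B : R3) (αAA αAB αBA αBB : ℝ) : Measure (R3 × R3) :=
  ENNReal.ofReal αAA • (Measure.dirac A).prod (Measure.dirac A)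
    + ENNReal.ofReal αAB • (Measure.dirac A).prod (Measure.dirac B)
    + ENNReal.ofReal αBA • (Measure.dirac B).prod (Measure.dirac A)
    + ENNReal.ofReal αBB • (Measure.dirac B).prod (Measure.dirac B)

/-! ### Auxiliary lemmas -/

lemma twoSitePair_apply (A B : R3) (hAB : A ≠ B) (a b c d : ℝ) (C D : R3) :
    twoSitePair A B a b c d ({C} ×ˢ {D}) =
      (((Measure.dirac A).prod (Measure.dirac A)) ({C} ×ˢ {D})) * ENNReal.ofReal a
      + (((Measure.dirac A).prod (Measure.dirac B)) ({C} ×ˢ {D})) * ENNReal.ofReal b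
      + (((Measure.dirac B).prod (Measure.dirac A)) ({C} ×ˢ {D})) * ENNReal.ofReal c
      + (((Measure.dirac B).prod (Measure.dirac B)) ({C} ×ˢ {D})) * ENNReal.ofReal d := by
  simp [twoSitePair, mul_comm]

open Classical in
lemma dirac_pair_apply (C D E F : R3) :
    ((Measure.dirac C).prod (Measure.dirac D)) ({(E, F)} : Set (R3 × R3))
      = if C = E ∧ D = F then 1 else 0 := by
  rw [Measure.dirac_prod_dirac, Measure.dirac_apply, Set.indicator_apply]
  simp [Prod.ext_iff]

lemma twoSitePair_AA (A B : R3) (hAB : A ≠ B) (a b c d : ℝ) :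
    twoSitePair A B a b c d ({A} ×ˢ {A}) = ENNReal.ofReal a := by
  rw [twoSitePair_apply A B hAB]
  simp [dirac_pair_apply, hAB, Ne.symm hAB]

lemma twoSitePair_AB (A B : R3) (hAB : A ≠ B) (a b c d : ℝ) :
    twoSitePair A B a b c d ({A} ×ˢ {B}) = ENNReal.ofReal b := by
  rw [twoSitePair_apply A B hAB]
  simp [dirac_pair_apply, hAB, Ne.symm hAB]

lemma twoSitePair_BA (A B : R3) (hAB : A ≠ B) (a b c d : ℝ) :
    twoSitePair A B a b c d ({B} ×ˢ {A}) = ENNReal.ofReal c := by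
  rw [twoSitePair_apply A B hAB]
  simp [dirac_pair_apply, hAB, Ne.symm hAB]

lemma twoSitePair_BB (A B : R3) (hAB : A ≠ B) (a b c d : ℝ) :
    twoSitePair A B a b c d ({B} ×ˢ {B}) = ENNReal.ofReal d := by
  rw [twoSitePair_apply A B hAB]
  simp [dirac_pair_apply, hAB, Ne.symm hAB]

lemma exists_perm_two {N : ℕ} (hN : 2 ≤ N) (i j : Fin N) (hij : i ≠ j) :
    ∃ σ : Equiv.Perm (Fin N), σ ⟨0, by omega⟩ = i ∧ σ ⟨1, by omega⟩ = j := by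
  set z : Fin N := ⟨0, by omega⟩ with hz
  set o : Fin N := ⟨1, by omega⟩ with ho
  have hzo : z ≠ o := by simp [hz, ho, Fin.ext_iff]
  classical
  set σ₁ := Equiv.swap z i with hσ₁
  have hj' : σ₁.symm j ≠ z := by
    intro h
    rw [Equiv.symm_apply_eq] at h
    rw [hσ₁, Equiv.swap_apply_left] at h
    exact hij h.symm
  set σ₂ := Equiv.swap o (σ₁.symm j) with hσ₂
  refine ⟨σ₂.trans σ₁, ?_, ?_⟩
  · have h2 : σ₂ z = z := Equiv.swap_apply_of_ne_of_ne hzo (Ne.symm hj')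
    simp [Equiv.trans_apply, h2, hσ₁, Equiv.swap_apply_left]
  · have h2 : σ₂ o = σ₁.symm j := Equiv.swap_apply_left _ _
    simp [Equiv.trans_apply, h2]

lemma measurable_comp_perm {N : ℕ} (σ : Equiv.Perm (Fin N)) :
    Measurable (fun x : Fin N → R3 => x ∘ σ) :=
  measurable_pi_lambda _ fun i => measurable_pi_apply (σ i)

lemma symm_pair_transfer {N : ℕ} (hN : 2 ≤ N) (p : Measure (Fin N → R3))
    (hs : IsSymmetricMeasure p) (C D : R3) (i j : Fin N) (hij : i ≠ j) :
    p {x | x i = C ∧ x j = D} = p {x | x ⟨0, by omega⟩ = C ∧ x ⟨1, by omega⟩ = D} := by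
  obtain ⟨σ, h0, h1⟩ := exists_perm_two hN i j hij
  set z : Fin N := ⟨0, by omega⟩
  set o : Fin N := ⟨1, by omega⟩
  have hS : MeasurableSet {x : Fin N → R3 | x z = C ∧ x o = D} := by
    have : {x : Fin N → R3 | x z = C ∧ x o = D}
        = (fun x : Fin N → R3 => x z) ⁻¹' {C} ∩ (fun x : Fin N → R3 => x o) ⁻¹' {D} := by
      ext x; simp
    rw [this]
    exact ((measurable_pi_apply z) (measurableSet_singleton C)).inter
      ((measurable_pi_apply o) (measurableSet_singleton D))
  have key := hs σ
  calc p {x | x i = C ∧ x j = D}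
      = p ((fun x : Fin N → R3 => x ∘ σ) ⁻¹' {x | x z = C ∧ x o = D}) := by
        congr 1
        ext x
        simp [Function.comp, h0, h1]
    _ = p.map (fun x : Fin N → R3 => x ∘ σ) {x | x z = C ∧ x o = D} :=
        (Measure.map_apply (measurable_comp_perm σ) hS).symm
    _ = p {x | x z = C ∧ x o = D} := by rw [key]

lemma forward_bound (A B : R3) (hAB : A ≠ B) (αAA αAB αBA αBB : ℝ)
    (hAA : 0 ≤ αAA) (hAB' : 0 ≤ αAB) (hBB : 0 ≤ αBB)
    {N : ℕ} (hN : 2 ≤ N)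
    (h : NDensityRep N hN (twoSitePair A B αAA αAB αBA αBB)) :
    ((N : ℝ) * (((N - 1 : ℕ) : ℝ) * αAB)) * ((N : ℝ) * (((N - 1 : ℕ) : ℝ) * αAB))
      ≤ ((N : ℝ) * (1 + ((N - 1 : ℕ) : ℝ) * αAA)) * ((N : ℝ) * (1 + ((N - 1 : ℕ) : ℝ) * αBB)) := by
  classical
  obtain ⟨p, hp, hsym, hmarg⟩ := h
  set z : Fin N := ⟨0, by omega⟩ with hzdef
  set o : Fin N := ⟨1, by omega⟩ with hodef
  have hproj : Measurable (fun x : Fin N → R3 => (x z, x o)) :=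
    (measurable_pi_apply z).prodMk (measurable_pi_apply o)
  have hev : ∀ C D : R3, p {x | x z = C ∧ x o = D}
      = twoSitePair A B αAA αAB αBA αBB ({C} ×ˢ {D}) := by
    intro C D
    rw [← hmarg]
    have : pairMarginal hN p = p.map (fun x : Fin N → R3 => (x z, x o)) := rfl
    rw [this, Measure.map_apply hproj
      ((measurableSet_singleton C).prod (measurableSet_singleton D))]
    congr 1
  have keyAA : ∀ i j : Fin N, i ≠ j → p {x | x i = A ∧ x j = A} = ENNReal.ofReal αAA :=
    fun i j hij => ((symm_pair_transfer hN p hsym A A i j hij).trans (hev A A)).trans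
      (twoSitePair_AA A B hAB _ _ _ _)
  have keyAB : ∀ i j : Fin N, i ≠ j → p {x | x i = A ∧ x j = B} = ENNReal.ofReal αAB :=
    fun i j hij => ((symm_pair_transfer hN p hsym A B i j hij).trans (hev A B)).trans
      (twoSitePair_AB A B hAB _ _ _ _)
  have keyBB : ∀ i j : Fin N, i ≠ j → p {x | x i = B ∧ x j = B} = ENNReal.ofReal αBB :=
    fun i j hij => ((symm_pair_transfer hN p hsym B B i j hij).trans (hev B B)).trans
      (twoSitePair_BB A B hAB _ _ _ _)
  set SA : Fin N → Set (Fin N → R3) := fun i => {x | x i = A} with hSAdef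
  set SB : Fin N → Set (Fin N → R3) := fun i => {x | x i = B} with hSBdef
  have hSA : ∀ i, MeasurableSet (SA i) := by
    intro i
    have : SA i = (fun x : Fin N → R3 => x i) ⁻¹' {A} := by ext x; simp [hSAdef]
    rw [this]
    exact measurable_pi_apply i (measurableSet_singleton A)
  have hSB : ∀ i, MeasurableSet (SB i) := by
    intro i
    have : SB i = (fun x : Fin N → R3 => x i) ⁻¹' {B} := by ext x; simp [hSBdef]
    rw [this]
    exact measurable_pi_apply i (measurableSet_singleton B)
  have keyAA' : ∀ i j : Fin N, i ≠ j → p (SA i ∩ SA j) = ENNReal.ofReal αAA := by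
    intro i j hij
    have : SA i ∩ SA j = {x | x i = A ∧ x j = A} := by
      ext x; simp [hSAdef, Set.mem_inter_iff]
    rw [this]; exact keyAA i j hij
  have keyAB' : ∀ i j : Fin N, i ≠ j → p (SA i ∩ SB j) = ENNReal.ofReal αAB := by
    intro i j hij
    have : SA i ∩ SB j = {x | x i = A ∧ x j = B} := by
      ext x; simp [hSAdef, hSBdef, Set.mem_inter_iff]
    rw [this]; exact keyAB i j hij
  have keyBB' : ∀ i j : Fin N, i ≠ j → p (SB i ∩ SB j) = ENNReal.ofReal αBB := by
    intro i j hij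
    have : SB i ∩ SB j = {x | x i = B ∧ x j = B} := by
      ext x; simp [hSBdef, Set.mem_inter_iff]
    rw [this]; exact keyBB i j hij
  have hind : ∀ (s t : Set (Fin N → R3)) (x : Fin N → R3),
      (s ∩ t).indicator (1 : (Fin N → R3) → ℝ≥0∞) x = s.indicator 1 x * t.indicator 1 x := by
    intro s t x
    by_cases hs : x ∈ s <;> by_cases ht : x ∈ t <;> simp [Set.indicator_apply, hs, ht]
  have hprod : ∀ (S T : Fin N → Set (Fin N → R3)), (∀ i, MeasurableSet (S i)) →
      (∀ i, MeasurableSet (T i)) →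
      ∫⁻ x, (∑ i, (S i).indicator (1 : (Fin N → R3) → ℝ≥0∞) x)
          * (∑ j, (T j).indicator (1 : (Fin N → R3) → ℝ≥0∞) x) ∂p
        = ∑ i, ∑ j, p (S i ∩ T j) := by
    intro S T hS hT
    have hx : ∀ x, (∑ i, (S i).indicator (1 : (Fin N → R3) → ℝ≥0∞) x)
        * (∑ j, (T j).indicator (1 : (Fin N → R3) → ℝ≥0∞) x)
        = ∑ i, ∑ j, ((S i ∩ T j).indicator (1 : (Fin N → R3) → ℝ≥0∞) x) := by
      intro x
      rw [Finset.sum_mul_sum]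
      exact Finset.sum_congr rfl fun i _ => Finset.sum_congr rfl fun j _ => (hind _ _ x).symm
    simp_rw [hx]
    rw [lintegral_finset_sum _ (fun i _ => Finset.measurable_sum _
      (fun j _ => measurable_one.indicator ((hS i).inter (hT j))))]
    refine Finset.sum_congr rfl fun i _ => ?_
    rw [lintegral_finset_sum _ (fun j _ => measurable_one.indicator ((hS i).inter (hT j)))]
    exact Finset.sum_congr rfl fun j _ => lintegral_indicator_one ((hS i).inter (hT j))
  set F : (Fin N → R3) → ℝ≥0∞ := fun x => ∑ i, (SA i).indicator 1 x with hFdef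
  set G : (Fin N → R3) → ℝ≥0∞ := fun x => ∑ i, (SB i).indicator 1 x with hGdef
  have hF : Measurable F := Finset.measurable_sum _
    (fun i _ => measurable_one.indicator (hSA i))
  have hG : Measurable G := Finset.measurable_sum _
    (fun i _ => measurable_one.indicator (hSB i))
  have hdiag : ∀ i, p (SA i ∩ SB i) = 0 := by
    intro i
    have : SA i ∩ SB i = ∅ := by
      ext x
      simp only [hSAdef, hSBdef, Set.mem_inter_iff, Set.mem_setOf_eq, Set.mem_empty_iff_false,
        iff_false, not_and]
      intro h1 h2
      exact hAB (h1.symm.trans h2)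
    rw [this, measure_empty]
  have hFG : ∫⁻ x, F x * G x ∂p
      = (N : ℝ≥0∞) * (((N - 1 : ℕ) : ℝ≥0∞) * ENNReal.ofReal αAB) := by
    rw [hFdef, hGdef, hprod SA SB hSA hSB]
    have inner : ∀ i : Fin N, ∑ j, p (SA i ∩ SB j)
        = ((N - 1 : ℕ) : ℝ≥0∞) * ENNReal.ofReal αAB := by
      intro i
      rw [← Finset.add_sum_erase _ _ (Finset.mem_univ i), hdiag i, zero_add,
        Finset.sum_congr rfl (fun j hj => keyAB' i j (Ne.symm (Finset.ne_of_mem_erase hj))),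
        Finset.sum_const, Finset.card_erase_of_mem (Finset.mem_univ i), Finset.card_univ,
        Fintype.card_fin, nsmul_eq_mul]
    rw [Finset.sum_congr rfl (fun i _ => inner i), Finset.sum_const, Finset.card_univ,
      Fintype.card_fin, nsmul_eq_mul]
  have hFF : ∫⁻ x, F x * F x ∂p
      ≤ (N : ℝ≥0∞) * (1 + ((N - 1 : ℕ) : ℝ≥0∞) * ENNReal.ofReal αAA) := by
    rw [hFdef, hprod SA SA hSA hSA]
    calc ∑ i : Fin N, ∑ j, p (SA i ∩ SA j)
        ≤ ∑ _i : Fin N, (1 + ((N - 1 : ℕ) : ℝ≥0∞) * ENNReal.ofReal αAA) := by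
          refine Finset.sum_le_sum fun i _ => ?_
          rw [← Finset.add_sum_erase _ _ (Finset.mem_univ i)]
          refine add_le_add ?_ (le_of_eq ?_)
          · rw [Set.inter_self]; exact prob_le_one
          · rw [Finset.sum_congr rfl (fun j hj => keyAA' i j (Ne.symm (Finset.ne_of_mem_erase hj))),
              Finset.sum_const, Finset.card_erase_of_mem (Finset.mem_univ i), Finset.card_univ,
              Fintype.card_fin, nsmul_eq_mul]
      _ = (N : ℝ≥0∞) * (1 + ((N - 1 : ℕ) : ℝ≥0∞) * ENNReal.ofReal αAA) := by
          rw [Finset.sum_const, Finset.card_univ, Fintype.card_fin, nsmul_eq_mul]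
  have hGG : ∫⁻ x, G x * G x ∂p
      ≤ (N : ℝ≥0∞) * (1 + ((N - 1 : ℕ) : ℝ≥0∞) * ENNReal.ofReal αBB) := by
    rw [hGdef, hprod SB SB hSB hSB]
    calc ∑ i : Fin N, ∑ j, p (SB i ∩ SB j)
        ≤ ∑ _i : Fin N, (1 + ((N - 1 : ℕ) : ℝ≥0∞) * ENNReal.ofReal αBB) := by
          refine Finset.sum_le_sum fun i _ => ?_
          rw [← Finset.add_sum_erase _ _ (Finset.mem_univ i)]
          refine add_le_add ?_ (le_of_eq ?_)
          · rw [Set.inter_self]; exact prob_le_one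
          · rw [Finset.sum_congr rfl (fun j hj => keyBB' i j (Ne.symm (Finset.ne_of_mem_erase hj))),
              Finset.sum_const, Finset.card_erase_of_mem (Finset.mem_univ i), Finset.card_univ,
              Fintype.card_fin, nsmul_eq_mul]
      _ = (N : ℝ≥0∞) * (1 + ((N - 1 : ℕ) : ℝ≥0∞) * ENNReal.ofReal αBB) := by
          rw [Finset.sum_const, Finset.card_univ, Fintype.card_fin, nsmul_eq_mul]
  -- Cauchy–Schwarz
  set X : ℝ≥0∞ := (N : ℝ≥0∞) * (1 + ((N - 1 : ℕ) : ℝ≥0∞) * ENNReal.ofReal αAA) with hXdef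
  set Y : ℝ≥0∞ := (N : ℝ≥0∞) * (1 + ((N - 1 : ℕ) : ℝ≥0∞) * ENNReal.ofReal αBB) with hYdef
  have hNne : (N : ℝ≥0∞) ≠ 0 := by
    simp only [ne_eq, Nat.cast_eq_zero]; omega
  have hX0 : X ≠ 0 := by
    rw [hXdef]
    exact mul_ne_zero hNne (by simp)
  have hXt : X ≠ ⊤ := by
    rw [hXdef]
    exact ENNReal.mul_ne_top (ENNReal.natCast_ne_top N)
      (ENNReal.add_ne_top.mpr ⟨ENNReal.one_ne_top,
        ENNReal.mul_ne_top (ENNReal.natCast_ne_top _) ENNReal.ofReal_ne_top⟩)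
  have hY0 : Y ≠ 0 := by
    rw [hYdef]
    exact mul_ne_zero hNne (by simp)
  have hYt : Y ≠ ⊤ := by
    rw [hYdef]
    exact ENNReal.mul_ne_top (ENNReal.natCast_ne_top N)
      (ENNReal.add_ne_top.mpr ⟨ENNReal.one_ne_top,
        ENNReal.mul_ne_top (ENNReal.natCast_ne_top _) ENNReal.ofReal_ne_top⟩)
  have hsq2 : ∀ y : ℝ≥0∞, y ^ (2:ℝ) = y * y := fun y => by
    rw [show (2:ℝ) = ((2:ℕ):ℝ) by norm_num, ENNReal.rpow_natCast, pow_two]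
  have hCS := ENNReal.lintegral_mul_le_Lp_mul_Lq p
    (Real.HolderConjugate.two_two) hF.aemeasurable hG.aemeasurable
  simp_rw [Pi.mul_apply, hsq2] at hCS
  have hCS2 : ∫⁻ x, F x * G x ∂p ≤ X ^ (1/2:ℝ) * Y ^ (1/2:ℝ) :=
    hCS.trans (mul_le_mul' (ENNReal.rpow_le_rpow hFF (by norm_num))
      (ENNReal.rpow_le_rpow hGG (by norm_num)))
  have hsqle : (∫⁻ x, F x * G x ∂p) * (∫⁻ x, F x * G x ∂p) ≤ X * Y := by
    calc (∫⁻ x, F x * G x ∂p) * (∫⁻ x, F x * G x ∂p)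
        ≤ (X ^ (1/2:ℝ) * Y ^ (1/2:ℝ)) * (X ^ (1/2:ℝ) * Y ^ (1/2:ℝ)) := mul_le_mul' hCS2 hCS2
      _ = (X ^ (1/2:ℝ) * X ^ (1/2:ℝ)) * (Y ^ (1/2:ℝ) * Y ^ (1/2:ℝ)) := by ring
      _ = X * Y := by
          rw [← ENNReal.rpow_add _ _ hX0 hXt, ← ENNReal.rpow_add _ _ hY0 hYt]
          norm_num
  rw [hFG] at hsqle
  -- convert to reals
  have hLeq : (N : ℝ≥0∞) * (((N - 1 : ℕ) : ℝ≥0∞) * ENNReal.ofReal αAB)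
      = ENNReal.ofReal ((N : ℝ) * (((N - 1 : ℕ) : ℝ) * αAB)) := by
    rw [ENNReal.ofReal_mul (by positivity), ENNReal.ofReal_mul (by positivity),
      ENNReal.ofReal_natCast, ENNReal.ofReal_natCast]
  have hXeq : X = ENNReal.ofReal ((N : ℝ) * (1 + ((N - 1 : ℕ) : ℝ) * αAA)) := by
    rw [hXdef, ENNReal.ofReal_mul (by positivity),
      ENNReal.ofReal_add (by norm_num) (by positivity),
      ENNReal.ofReal_mul (by positivity), ENNReal.ofReal_one, ENNReal.ofReal_natCast,
      ENNReal.ofReal_natCast]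
  have hYeq : Y = ENNReal.ofReal ((N : ℝ) * (1 + ((N - 1 : ℕ) : ℝ) * αBB)) := by
    rw [hYdef, ENNReal.ofReal_mul (by positivity),
      ENNReal.ofReal_add (by norm_num) (by positivity),
      ENNReal.ofReal_mul (by positivity), ENNReal.ofReal_one, ENNReal.ofReal_natCast,
      ENNReal.ofReal_natCast]
  rw [hLeq, hXeq, hYeq, ← ENNReal.ofReal_mul (by positivity),
    ← ENNReal.ofReal_mul (by positivity)] at hsqle
  exact (ENNReal.ofReal_le_ofReal_iff (by positivity)).mp hsqle

lemma sq_le_of_all_eps (αAA αAB αBB : ℝ) (hAA : 0 ≤ αAA) (hAB' : 0 ≤ αAB) (hBB : 0 ≤ αBB)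
    (hAA1 : αAA ≤ 1) (hBB1 : αBB ≤ 1)
    (h : ∀ m : ℕ, 1 ≤ m → αAB ^ 2 ≤ (αAA + 1 / (m:ℝ)) * (αBB + 1 / (m:ℝ))) :
    αAB ^ 2 ≤ αAA * αBB := by
  by_contra hlt
  push_neg at hlt
  have hε : 0 < αAB ^ 2 - αAA * αBB := by linarith
  obtain ⟨m, hm⟩ := exists_nat_gt (max 1 (3 / (αAB ^ 2 - αAA * αBB)))
  have hm1 : (1:ℝ) ≤ m := le_trans (le_max_left _ _) hm.le
  have hmpos : (0:ℝ) < m := by linarith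
  have h3 : 3 / (αAB ^ 2 - αAA * αBB) < m := lt_of_le_of_lt (le_max_right _ _) hm
  have h3' : 3 < (αAB ^ 2 - αAA * αBB) * m := by
    rw [div_lt_iff₀ hε] at h3
    linarith [h3]
  have key := h m (by exact_mod_cast hm1)
  set u : ℝ := 1 / (m:ℝ) with hu
  have hupos : 0 < u := by positivity
  have hu1 : u ≤ 1 := by rw [hu, div_le_one hmpos]; exact hm1
  have h3u : 3 * u < αAB ^ 2 - αAA * αBB := by
    rw [hu, mul_one_div, div_lt_iff₀ hmpos]
    linarith [h3']
  nlinarith [key, hupos, hu1, h3u, hAA1, hBB1, hAA, hBB, mul_nonneg hupos.le hupos.le]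

lemma forward_sqrt (A B : R3) (hAB : A ≠ B) (αAA αAB αBA αBB : ℝ)
    (hAA : 0 ≤ αAA) (hAB' : 0 ≤ αAB) (hBA : 0 ≤ αBA) (hBB : 0 ≤ αBB)
    (hsum : αAA + αAB + αBA + αBB = 1) (hsymm : αAB = αBA)
    (h : ∀ N : ℕ, ∀ hN : 2 ≤ N, NDensityRep N hN (twoSitePair A B αAA αAB αBA αBB)) :
    αAB + αBA ≤ 2 * Real.sqrt (αAA * αBB) := by
  have key : ∀ m : ℕ, 1 ≤ m → αAB ^ 2 ≤ (αAA + 1 / (m:ℝ)) * (αBB + 1 / (m:ℝ)) := by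
    intro m hm
    have hN : 2 ≤ m + 1 := by omega
    have hb := forward_bound A B hAB αAA αAB αBA αBB hAA hAB' hBB hN (h (m + 1) hN)
    have hm1 : (m + 1 - 1 : ℕ) = m := by omega
    rw [hm1] at hb
    have hmpos : (0:ℝ) < m := by exact_mod_cast hm
    have hfac : (0:ℝ) < ((m:ℝ) * ((m:ℝ) + 1)) ^ 2 := by positivity
    rw [← mul_le_mul_iff_right₀ hfac]
    have hcast : ((m + 1 : ℕ) : ℝ) = (m:ℝ) + 1 := by push_cast; ring
    rw [hcast] at hb
    calc ((m:ℝ) * ((m:ℝ) + 1)) ^ 2 * αAB ^ 2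
        = (((m:ℝ) + 1) * ((m:ℝ) * αAB)) * (((m:ℝ) + 1) * ((m:ℝ) * αAB)) := by ring
      _ ≤ (((m:ℝ) + 1) * (1 + (m:ℝ) * αAA)) * (((m:ℝ) + 1) * (1 + (m:ℝ) * αBB)) := hb
      _ = ((m:ℝ) * ((m:ℝ) + 1)) ^ 2 * ((αAA + 1 / (m:ℝ)) * (αBB + 1 / (m:ℝ))) := by
          field_simp
          ring
  have hsq : αAB ^ 2 ≤ αAA * αBB :=
    sq_le_of_all_eps αAA αAB αBB hAA hAB' hBB (by linarith) (by linarith) key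
  have : αAB ≤ Real.sqrt (αAA * αBB) :=
    (Real.le_sqrt hAB' (mul_nonneg hAA hBB)).mpr hsq
  linarith [this, hsymm]

lemma smul_prod' {α β : Type*} [MeasurableSpace α] [MeasurableSpace β] (c : ℝ≥0∞)
    (μ : Measure α) (ν : Measure β) [SFinite μ] [SFinite ν] :
    (c • μ).prod ν = c • (μ.prod ν) := by
  ext s hs
  rw [Measure.smul_apply, Measure.prod_apply hs, Measure.prod_apply hs,
    lintegral_smul_measure, smul_eq_mul]

lemma prod_smul' {α β : Type*} [MeasurableSpace α] [MeasurableSpace β] (c : ℝ≥0∞) (hc : c ≠ ⊤)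
    (μ : Measure α) (ν : Measure β) [SFinite μ] [SFinite ν] :
    μ.prod (c • ν) = c • (μ.prod ν) := by
  ext s hs
  rw [Measure.smul_apply, Measure.prod_apply hs, Measure.prod_apply hs, smul_eq_mul,
    ← lintegral_const_mul' _ _ hc]
  simp_rw [Measure.smul_apply, smul_eq_mul]

lemma rep_construction (A B : R3) (αAA αAB αBA αBB : ℝ)
    (wA wB w t : ℝ) (hwA : 0 ≤ wA) (hwB : 0 ≤ wB) (hw : 0 ≤ w) (ht : 0 ≤ t) (ht1 : t ≤ 1)
    (h1 : wA + w * (t * t) = αAA) (h2 : w * (t * (1 - t)) = αAB)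
    (h2' : w * ((1 - t) * t) = αBA) (h3 : wB + w * ((1 - t) * (1 - t)) = αBB)
    (hW : wA + wB + w = 1)
    (N : ℕ) (hN : 2 ≤ N) :
    NDensityRep N hN (twoSitePair A B αAA αAB αBA αBB) := by
  classical
  have h1t : 0 ≤ 1 - t := by linarith
  set μ : Measure R3 := ENNReal.ofReal t • Measure.dirac A
      + ENNReal.ofReal (1 - t) • Measure.dirac B with hμdef
  have hμ : IsProbabilityMeasure μ := by
    constructor
    rw [hμdef]
    simp only [Measure.add_apply, Measure.smul_apply, smul_eq_mul, measure_univ, mul_one]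
    rw [← ENNReal.ofReal_add ht h1t]
    norm_num
  haveI := hμ
  set pN : Measure (Fin N → R3) := ENNReal.ofReal wA • Measure.dirac (fun _ => A)
      + ENNReal.ofReal wB • Measure.dirac (fun _ => B)
      + ENNReal.ofReal w • Measure.pi (fun _ : Fin N => μ) with hpNdef
  set z : Fin N := ⟨0, by omega⟩ with hzdef
  set o : Fin N := ⟨1, by omega⟩ with hodef
  have hzo : z ≠ o := by simp [hzdef, hodef, Fin.ext_iff]
  have hproj : Measurable (fun x : Fin N → R3 => (x z, x o)) :=
    (measurable_pi_apply z).prodMk (measurable_pi_apply o)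
  refine ⟨pN, ?_, ?_, ?_⟩
  · constructor
    rw [hpNdef]
    simp only [Measure.add_apply, Measure.smul_apply, smul_eq_mul, measure_univ, mul_one]
    rw [← ENNReal.ofReal_add hwA hwB, ← ENNReal.ofReal_add (by linarith : (0:ℝ) ≤ wA + wB) hw, hW]
    norm_num
  · intro σ
    have hmσ := measurable_comp_perm σ
    have hpi : (Measure.pi fun _ : Fin N => μ).map (fun x => x ∘ σ)
        = Measure.pi fun _ : Fin N => μ := by
      refine (Measure.pi_eq fun s hs => ?_).symm
      rw [Measure.map_apply hmσ (MeasurableSet.univ_pi hs)]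
      have hpre : (fun x : Fin N → R3 => x ∘ σ) ⁻¹' (Set.pi Set.univ s)
          = Set.pi Set.univ (fun j => s (σ.symm j)) := by
        ext x
        simp only [Set.mem_preimage, Set.mem_pi, Set.mem_univ, forall_true_left,
          Function.comp_apply]
        constructor
        · intro h j
          have := h (σ.symm j)
          simpa using this
        · intro h i
          have := h (σ i)
          simpa using this
      rw [hpre, Measure.pi_pi]
      exact Equiv.prod_comp σ.symm fun i => μ (s i)
    rw [hpNdef, Measure.map_add _ _ hmσ, Measure.map_add _ _ hmσ, Measure.map_smul,
      Measure.map_smul, Measure.map_smul, Measure.map_dirac' hmσ, Measure.map_dirac' hmσ, hpi]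
    rfl
  · have hpiproj : (Measure.pi fun _ : Fin N => μ).map (fun x : Fin N → R3 => (x z, x o))
        = μ.prod μ := by
      refine (Measure.prod_eq fun s t hs ht' => ?_).symm
      rw [Measure.map_apply hproj (hs.prod ht')]
      have hpre : (fun x : Fin N → R3 => (x z, x o)) ⁻¹' (s ×ˢ t)
          = Set.pi Set.univ (fun i => if i = z then s else if i = o then t else Set.univ) := by
        ext x
        simp only [Set.mem_preimage, Set.mem_prod, Set.mem_pi, Set.mem_univ, forall_true_left]
        constructor
        · rintro ⟨hxs, hxt⟩ i
          by_cases hiz : i = z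
          · subst hiz; simpa using hxs
          · by_cases hio : i = o
            · subst hio; simp [hiz, hxt]
            · simp [hiz, hio]
        · intro hx
          constructor
          · have := hx z; simpa using this
          · have := hx o; simpa [Ne.symm hzo] using this
      rw [hpre, Measure.pi_pi]
      rw [← Finset.mul_prod_erase Finset.univ _ (Finset.mem_univ z),
        ← Finset.mul_prod_erase _ _ (Finset.mem_erase.mpr ⟨Ne.symm hzo, Finset.mem_univ o⟩)]
      have e1 : μ (if z = z then s else if z = o then t else Set.univ) = μ s := by simp
      have e2 : μ (if o = z then s else if o = o then t else Set.univ) = μ t := by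
        simp [Ne.symm hzo]
      have e3 : ∀ i ∈ (Finset.univ.erase z).erase o,
          μ (if i = z then s else if i = o then t else Set.univ) = 1 := by
        intro i hi
        obtain ⟨hio, hi2⟩ := Finset.mem_erase.mp hi
        obtain ⟨hiz, -⟩ := Finset.mem_erase.mp hi2
        simp [hiz, hio]
      rw [e1, e2, Finset.prod_congr rfl e3, Finset.prod_const_one, mul_one]
    have hμexp : μ.prod μ
        = ENNReal.ofReal (t * t) • Measure.dirac ((A, A) : R3 × R3)
          + ENNReal.ofReal (t * (1 - t)) • Measure.dirac ((A, B) : R3 × R3)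
          + ENNReal.ofReal ((1 - t) * t) • Measure.dirac ((B, A) : R3 × R3)
          + ENNReal.ofReal ((1 - t) * (1 - t)) • Measure.dirac ((B, B) : R3 × R3) := by
      nth_rewrite 1 [hμdef]
      nth_rewrite 1 [hμdef]
      rw [Measure.add_prod, smul_prod', smul_prod', Measure.prod_add, Measure.prod_add,
        prod_smul' _ ENNReal.ofReal_ne_top, prod_smul' _ ENNReal.ofReal_ne_top,
        prod_smul' _ ENNReal.ofReal_ne_top, prod_smul' _ ENNReal.ofReal_ne_top,
        Measure.dirac_prod_dirac, Measure.dirac_prod_dirac, Measure.dirac_prod_dirac,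
        Measure.dirac_prod_dirac, smul_add, smul_add, smul_smul, smul_smul, smul_smul,
        smul_smul, ← ENNReal.ofReal_mul ht, ← ENNReal.ofReal_mul ht,
        ← ENNReal.ofReal_mul h1t, ← ENNReal.ofReal_mul h1t]
      abel
    have hPM : pairMarginal hN pN = pN.map (fun x : Fin N → R3 => (x z, x o)) := rfl
    rw [hPM, hpNdef, Measure.map_add _ _ hproj, Measure.map_add _ _ hproj, Measure.map_smul,
      Measure.map_smul, Measure.map_smul, Measure.map_dirac' hproj, Measure.map_dirac' hproj,
      hpiproj, hμexp]
    have eAA : ENNReal.ofReal αAA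
        = ENNReal.ofReal wA + ENNReal.ofReal w * ENNReal.ofReal (t * t) := by
      rw [← ENNReal.ofReal_mul hw,
        ← ENNReal.ofReal_add hwA (mul_nonneg hw (mul_nonneg ht ht)), h1]
    have eAB : ENNReal.ofReal αAB = ENNReal.ofReal w * ENNReal.ofReal (t * (1 - t)) := by
      rw [← ENNReal.ofReal_mul hw, h2]
    have eBA : ENNReal.ofReal αBA = ENNReal.ofReal w * ENNReal.ofReal ((1 - t) * t) := by
      rw [← ENNReal.ofReal_mul hw, h2']
    have eBB : ENNReal.ofReal αBB
        = ENNReal.ofReal wB + ENNReal.ofReal w * ENNReal.ofReal ((1 - t) * (1 - t)) := by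
      rw [← ENNReal.ofReal_mul hw,
        ← ENNReal.ofReal_add hwB (mul_nonneg hw (mul_nonneg h1t h1t)), h3]
    rw [twoSitePair, Measure.dirac_prod_dirac, Measure.dirac_prod_dirac,
      Measure.dirac_prod_dirac, Measure.dirac_prod_dirac, eAA, eAB, eBA, eBB]
    ext s hs
    simp only [Measure.add_apply, Measure.smul_apply, smul_eq_mul]
    ring

lemma backward_rep (A B : R3) (hAB : A ≠ B) (αAA αAB αBA αBB : ℝ)
    (hAA : 0 ≤ αAA) (hAB' : 0 ≤ αAB) (hBA : 0 ≤ αBA) (hBB : 0 ≤ αBB)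
    (hsum : αAA + αAB + αBA + αBB = 1) (hsymm : αAB = αBA)
    (hineq : αAB + αBA ≤ 2 * Real.sqrt (αAA * αBB)) :
    ∀ N : ℕ, ∀ hN : 2 ≤ N, NDensityRep N hN (twoSitePair A B αAA αAB αBA αBB) := by
  intro N hN
  by_cases hc : αAB = 0
  · refine rep_construction A B αAA αAB αBA αBB αAA αBB 0 0 hAA hBB le_rfl le_rfl zero_le_one
      (by ring) (by rw [hc]; ring) (by rw [← hsymm, hc]; ring) (by ring) (by linarith) N hN
  · have hpos : 0 < αAB := lt_of_le_of_ne hAB' (Ne.symm hc)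
    set a : ℝ := Real.sqrt αAA with hadef
    set b : ℝ := Real.sqrt αBB with hbdef
    have ha0 : 0 ≤ a := Real.sqrt_nonneg _
    have hb0 : 0 ≤ b := Real.sqrt_nonneg _
    have ha2 : a ^ 2 = αAA := Real.sq_sqrt hAA
    have hb2 : b ^ 2 = αBB := Real.sq_sqrt hBB
    have hsqrt : Real.sqrt (αAA * αBB) = a * b := Real.sqrt_mul hAA αBB
    have hab : αAB ≤ a * b := by
      rw [hsqrt] at hineq
      linarith [hsymm, hineq]
    have ha : 0 < a := by
      rcases eq_or_lt_of_le ha0 with h | h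
      · exfalso
        have : a * b = 0 := by rw [← h]; ring
        linarith
      · exact h
    have hb : 0 < b := by
      rcases eq_or_lt_of_le hb0 with h | h
      · exfalso
        have : a * b = 0 := by rw [← h]; ring
        linarith
      · exact h
    have habpos : 0 < a + b := by linarith
    refine rep_construction A B αAA αAB αBA αBB
      (αAA - αAB * a / b) (αBB - αAB * b / a) (αAB * (a + b) ^ 2 / (a * b)) (a / (a + b))
      ?_ ?_ ?_ ?_ ?_ ?_ ?_ ?_ ?_ ?_ N hN
    · rw [sub_nonneg, div_le_iff₀ hb]
      nlinarith [mul_le_mul_of_nonneg_right hab ha.le, ha2]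
    · rw [sub_nonneg, div_le_iff₀ ha]
      nlinarith [mul_le_mul_of_nonneg_right hab hb.le, hb2]
    · exact div_nonneg (mul_nonneg hAB' (sq_nonneg _)) (mul_nonneg ha.le hb.le)
    · exact div_nonneg ha.le habpos.le
    · rw [div_le_one habpos]; linarith
    · rw [← ha2]; field_simp; ring
    · field_simp
      ring
    · rw [← hsymm]; field_simp; ring
    · rw [← hb2]; field_simp; ring
    · rw [← hsum, ← hsymm, ← ha2, ← hb2]; field_simp; ring

/-- A two-site pair measure (nonnegative, normalized, symmetric coefficients) is `N`-density
representable for every `N ≥ 2` if and only if `α_AB + α_BA ≤ 2 √(α_AA · α_BB)`. -/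
theorem all_N_rep_iff_sqrt_inequality (A B : R3) (hAB : A ≠ B)
    (αAA αAB αBA αBB : ℝ)
    (hAA : 0 ≤ αAA) (hAB' : 0 ≤ αAB) (hBA : 0 ≤ αBA) (hBB : 0 ≤ αBB)
    (hsum : αAA + αAB + αBA + αBB = 1) (hsymm : αAB = αBA) :
    (∀ N : ℕ, ∀ hN : 2 ≤ N, NDensityRep N hN (twoSitePair A B αAA αAB αBA αBB)) ↔
      αAB + αBA ≤ 2 * Real.sqrt (αAA * αBB) := by
  constructor
  · exact forward_sqrt A B hAB αAA αAB αBA αBB hAA hAB' hBA hBB hsum hsymm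
  · exact backward_rep A B hAB αAA αAB αBA αBB hAA hAB' hBA hBB hsum hsymm

end
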